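/- For n ≥ 3, the lower rank r2 of the multiplicative semigroup A^+(B_n) equals n + 3; that is, the minimum cardinality of a generating subset of A^+(B_n) is n + 3. -/

import Mathlib

def Bn (n : ℕ) : Type := Option (Fin n × Fin n)

def Bn.mul {n : ℕ} : Bn n → Bn n → Bn n
  | some (i, j), some (k, l) => if j = k then some (i, l) else none
  | _, _ => none

instance (n : ℕ) : Mul (Bn n) := ⟨Bn.mul⟩

instance (n : ℕ) : Semigroup (Bn n) where
  mul_assoc a b c := by
    show Bn.mul (Bn.mul a b) c = Bn.mul a (Bn.mul b c)
    have A : ∀ (c : Prop) [Decidable c] (x : Bn n), c → @ite (Bn n) c _ x none = x :=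
      fun _ _ _ h => if_pos h
    have B : ∀ (c : Prop) [Decidable c] (x : Bn n), ¬c → @ite (Bn n) c _ x none = none :=
      fun _ _ _ h => if_neg h
    rcases a with _ | ⟨i, j⟩ <;> rcases b with _ | ⟨k, l⟩ <;> rcases c with _ | ⟨p, q⟩
    all_goals first | rfl | skip
    · by_cases hjk : j = k
      · exact (congrArg (fun x : Bn n => Bn.mul x none) (A _ (some (i, l)) hjk)).trans rfl
      · exact (congrArg (fun x : Bn n => Bn.mul x none) (B _ (some (i, l)) hjk)).trans rfl
    · by_cases hjk : j = k <;> by_cases hlp : l = p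
      · exact (congrArg (fun x : Bn n => Bn.mul x (some (p, q))) (A _ (some (i, l)) hjk)).trans
          ((A _ (some (i, q)) hlp).trans ((A _ (some (i, q)) hjk).symm.trans
            (congrArg (fun x : Bn n => Bn.mul (some (i, j)) x) (A _ (some (k, q)) hlp).symm)))
      · exact (congrArg (fun x : Bn n => Bn.mul x (some (p, q))) (A _ (some (i, l)) hjk)).trans
          ((B _ (some (i, q)) hlp).trans
            (congrArg (fun x : Bn n => Bn.mul (some (i, j)) x) (B _ (some (k, q)) hlp).symm))
      · exact (congrArg (fun x : Bn n => Bn.mul x (some (p, q))) (B _ (some (i, l)) hjk)).trans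
          ((B _ (some (i, q)) hjk).symm.trans
            (congrArg (fun x : Bn n => Bn.mul (some (i, j)) x) (A _ (some (k, q)) hlp).symm))
      · exact (congrArg (fun x : Bn n => Bn.mul x (some (p, q))) (B _ (some (i, l)) hjk)).trans
            (congrArg (fun x : Bn n => Bn.mul (some (i, j)) x) (B _ (some (k, q)) hlp).symm)

/-- Maps on `Bn n`, composed left-to-right: `x (f * g) = (x f) g`. -/
def MapBn (n : ℕ) : Type := Bn n → Bn n

instance (n : ℕ) : Monoid (MapBn n) where
  mul f g := fun x => g (f x)
  one := fun x => x
  mul_assoc _ _ _ := rfl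
  one_mul _ := rfl
  mul_one _ := rfl

/-- The constant map `ξ_c`. -/
def constMap (n : ℕ) (c : Bn n) : MapBn n := fun _ => c

/-- The `n`-support map `(p, q; σ)`, sending `(i, p) ↦ (iσ, q)` and all else to `θ`. -/
def nSuppMap (n : ℕ) (p q : Fin n) (σ : Equiv.Perm (Fin n)) : MapBn n :=
  fun x =>
    match x with
    | some (i, j) => if j = p then some (σ i, q) else none
    | none => none

instance (n : ℕ) : DecidableEq (Bn n) :=
  inferInstanceAs (DecidableEq (Option (Fin n × Fin n)))

/-- The singleton-support map `((k,l) → (p,q))`. -/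
def sglMap (n : ℕ) (k l p q : Fin n) : MapBn n :=
  fun x => @ite _ (x = some (k, l)) (instDecidableEqBn n x (some (k, l))) (some (p, q)) none

/-- The multiplicative semigroup reduct `A⁺(Bₙ)`, as a set of maps on `Bn n`. -/
def APlus (n : ℕ) : Set (MapBn n) :=
  {f | (∃ c, f = constMap n c) ∨ (∃ p q σ, f = nSuppMap n p q σ) ∨
       (∃ k l p q, f = sglMap n k l p q)}

/-- Independence of a subset of a semigroup. -/
def IndependentIn {S : Type*} [Semigroup S] (U : Set S) : Prop :=
  ∀ a ∈ U, a ∉ Subsemigroup.closure (U \ {a})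

/-!
The `n + 3` generators: the constant `ξ_(0,0)`, the singleton-support map `(0,0) ↦ (0,0)`, the
loop `(0, 0; (0 1))`, and the `n` maps `(i, i + 1; ·)` along the cycle `0 → 1 → ⋯ → n-1 → 0`, all
labelled `1` except the one leaving `0`, which is labelled by the `n`-cycle. Around the cycle they
give the loop `(0, 0; (0 1 ⋯ n-1))`; with `(0, 0; (0 1))` this yields `(0, 0; σ)` for all `σ`, and
composing with paths along the cycle yields every `n`-support map. Singleton-support maps and
constants then come from the other two generators.

Conversely, a product is a constant `≠ θ` only if a factor is, has singleton support only if a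
factor has, and equals `(p, q; σ)` only if it factors as `(p, r; α) (r, q; β)` with `σ = β α`. So a
generating set contains a constant, a singleton-support map, and an `n`-support map with each
source `p`. If it contained just one of the latter per source, `(p, τ p; ρ p)`, then every loop
`(p, p; σ)` of the closure would be a product along the `τ`-orbit of `p`,
`σ = ρ (τ^(k-1) p) ⋯ ρ (τ p) ρ p`, and any two such loop labels commute; but the loops at `p`
realise all of `Sₙ`, which is not abelian for `n ≥ 3`.
-/

open Equiv Set Bn

lemma Subsemigroup.exists_mem_of_mem_closure {M : Type*} [Mul M] {U A X : Set M}
    (hUA : (Subsemigroup.closure U : Set M) ⊆ A)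
    (hX : ∀ f ∈ A, ∀ g ∈ A, f * g ∈ X → f ∈ X ∨ g ∈ X) {x : M}
    (hx : x ∈ Subsemigroup.closure U) (hxX : x ∈ X) : ∃ u ∈ U, u ∈ X := by
  induction hx using Subsemigroup.closure_induction with
  | mem u hu => exact ⟨u, hu, hxX⟩
  | mul f g hf hg ihf ihg =>
    rcases hX f (hUA hf) g (hUA hg) hxX with h | h
    exacts [ihf h, ihg h]

lemma Equiv.not_commute_swap_swap {α : Type*} [DecidableEq α] {a b c : α} (hab : a ≠ b)
    (hac : a ≠ c) (hbc : b ≠ c) : ¬Commute (swap a b) (swap b c) := by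
  intro h
  have := congrArg (· c) h.eq
  exact hab (by simpa [swap_apply_of_ne_of_ne hac.symm hbc.symm] using this)

section OrbitProd

variable {α G : Type*} [Monoid G]

def orbitProd (τ : α → α) (ρ : α → G) (p : α) : ℕ → G
  | 0 => 1
  | k + 1 => ρ (τ^[k] p) * orbitProd τ ρ p k

lemma orbitProd_add (τ : α → α) (ρ : α → G) (p : α) (a b : ℕ) :
    orbitProd τ ρ p (a + b) = orbitProd τ ρ (τ^[a] p) b * orbitProd τ ρ p a := by
  induction b with
  | zero => simp [orbitProd]
  | succ b ih =>
    rw [← add_assoc, orbitProd, orbitProd, ih, ← mul_assoc, ← Function.iterate_add_apply,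
      add_comm b]

lemma commute_orbitProd {τ : α → α} (ρ : α → G) {p : α} {a b : ℕ} (ha : τ^[a] p = p)
    (hb : τ^[b] p = p) : Commute (orbitProd τ ρ p a) (orbitProd τ ρ p b) := by
  calc orbitProd τ ρ p a * orbitProd τ ρ p b = orbitProd τ ρ p (b + a) := by
        rw [orbitProd_add, hb]
    _ = orbitProd τ ρ p (a + b) := by rw [add_comm]
    _ = orbitProd τ ρ p b * orbitProd τ ρ p a := by rw [orbitProd_add, ha]

end OrbitProd

lemma Subgroup.closure_subset_of_subsemigroup {G : Type*} [Group G] [Finite G]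
    {K : Subsemigroup G} {s : Set G} (hs : s ⊆ K) (h₁ : (1 : G) ∈ K) :
    (Subgroup.closure s : Set G) ⊆ K := by
  rw [← Subgroup.coe_toSubmonoid, Subgroup.closure_toSubmonoid_of_finite]
  exact Submonoid.closure_le (S := { K with one_mem' := h₁ }) |>.2 hs

-- `Bn n` is a `def` over `Option`, so bare `some`/`none` terms are ill-typed for `simp`; these
-- constructors carry the type `Bn n`.
namespace Bn

variable {n : ℕ}

def zero : Bn n := none

def mk (i j : Fin n) : Bn n := some (i, j)

@[simp] lemma mk_inj {i j k l : Fin n} : mk i j = mk k l ↔ i = k ∧ j = l := by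
  simp [mk, Bn]

@[simp] lemma mk_ne_zero (i j : Fin n) : mk i j ≠ zero := by
  simp [mk, zero, Bn]

@[simp] lemma zero_ne_mk (i j : Fin n) : zero ≠ mk i j :=
  (mk_ne_zero i j).symm

lemma eq_zero_or_eq_mk (x : Bn n) : x = zero ∨ ∃ i j, x = mk i j := by
  rcases x with _ | ⟨i, j⟩
  exacts [Or.inl rfl, Or.inr ⟨i, j, rfl⟩]

instance : Finite (Bn n) := inferInstanceAs (Finite (Option (Fin n × Fin n)))

end Bn

namespace MapBn

variable {n : ℕ}

@[simp] lemma mul_apply (f g : MapBn n) (x : Bn n) : (f * g) x = g (f x) := rfl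

lemma ext {f g : MapBn n} (h₀ : f zero = g zero) (h : ∀ i j, f (mk i j) = g (mk i j)) :
    f = g := by
  funext x
  rcases x.eq_zero_or_eq_mk with rfl | ⟨i, j, rfl⟩
  exacts [h₀, h i j]

instance : Finite (MapBn n) := inferInstanceAs (Finite (Bn n → Bn n))

end MapBn

section Multiplication

variable {n : ℕ}

@[simp] lemma constMap_apply (c x : Bn n) : constMap n c x = c := rfl

@[simp] lemma nSuppMap_zero (p q : Fin n) (σ : Perm (Fin n)) : nSuppMap n p q σ zero = zero :=
  rfl

@[simp] lemma nSuppMap_mk (p q : Fin n) (σ : Perm (Fin n)) (i j : Fin n) :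
    nSuppMap n p q σ (mk i j) = if j = p then mk (σ i) q else zero := rfl

@[simp] lemma sglMap_zero (k l p q : Fin n) : sglMap n k l p q zero = zero := rfl

@[simp] lemma sglMap_mk (k l p q i j : Fin n) :
    sglMap n k l p q (mk i j) = if i = k ∧ j = l then mk p q else zero := by
  show (if mk i j = mk k l then mk p q else zero) = _
  exact if_congr mk_inj rfl rfl

@[simp] lemma constMap_ne_nSuppMap (c : Bn n) (p q : Fin n) (σ : Perm (Fin n)) :
    constMap n c ≠ nSuppMap n p q σ := by
  intro h
  have h₀ := congrFun h zero
  have h₁ := congrFun h (mk p p)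
  simp_all

@[simp] lemma constMap_ne_sglMap (c : Bn n) (k l p q : Fin n) :
    constMap n c ≠ sglMap n k l p q := by
  intro h
  have h₀ := congrFun h zero
  have h₁ := congrFun h (mk k l)
  simp_all

@[simp] lemma nSuppMap_ne_sglMap [Nontrivial (Fin n)] (p q : Fin n) (σ : Perm (Fin n))
    (k l p' q' : Fin n) : nSuppMap n p q σ ≠ sglMap n k l p' q' := by
  intro h
  obtain ⟨i, hi⟩ := exists_ne k
  have := congrFun h (mk i p)
  simp_all

@[simp] lemma nSuppMap_ne_constMap (c : Bn n) (p q : Fin n) (σ : Perm (Fin n)) :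
    nSuppMap n p q σ ≠ constMap n c :=
  (constMap_ne_nSuppMap c p q σ).symm

@[simp] lemma sglMap_ne_nSuppMap [Nontrivial (Fin n)] (p q : Fin n) (σ : Perm (Fin n))
    (k l p' q' : Fin n) : sglMap n k l p' q' ≠ nSuppMap n p q σ :=
  (nSuppMap_ne_sglMap p q σ k l p' q').symm

lemma nSuppMap_inj {p q p' q' : Fin n} {σ σ' : Perm (Fin n)} :
    nSuppMap n p q σ = nSuppMap n p' q' σ' ↔ p = p' ∧ q = q' ∧ σ = σ' := by
  refine ⟨fun h => ?_, by rintro ⟨rfl, rfl, rfl⟩; rfl⟩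
  have hp : p = p' := by
    by_contra hp
    simpa [hp] using congrFun h (mk p p)
  subst hp
  have hq : q = q' := (by simpa using congrFun h (mk p p) : _ ∧ _).2
  exact ⟨rfl, hq, Equiv.ext fun i => (by simpa using congrFun h (mk i p) : _ ∧ _).1⟩

@[simp] lemma constMap_mul (c : Bn n) (g : MapBn n) : constMap n c * g = constMap n (g c) := rfl

@[simp] lemma mul_constMap (f : MapBn n) (c : Bn n) : f * constMap n c = constMap n c := rfl

lemma nSuppMap_mul_nSuppMap (p q p' q' : Fin n) (σ σ' : Perm (Fin n)) :
    nSuppMap n p q σ * nSuppMap n p' q' σ' =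
      if q = p' then nSuppMap n p q' (σ' * σ) else constMap n zero := by
  refine MapBn.ext ?_ fun i j => ?_ <;> (split_ifs <;> simp_all) <;> split_ifs <;> simp_all

lemma nSuppMap_mul_sglMap (p q : Fin n) (σ : Perm (Fin n)) (k l p' q' : Fin n) :
    nSuppMap n p q σ * sglMap n k l p' q' =
      if q = l then sglMap n (σ⁻¹ k) p p' q' else constMap n zero := by
  refine MapBn.ext ?_ fun i j => ?_ <;> (split_ifs <;> simp_all) <;> split_ifs <;>
    simp_all [Equiv.eq_symm_apply]

lemma sglMap_mul_nSuppMap (k l p q p' q' : Fin n) (σ : Perm (Fin n)) :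
    sglMap n k l p q * nSuppMap n p' q' σ =
      if q = p' then sglMap n k l (σ p) q' else constMap n zero := by
  refine MapBn.ext ?_ fun i j => ?_ <;> (split_ifs <;> simp_all) <;> split_ifs <;> simp_all

lemma sglMap_mul_sglMap (k l p q k' l' p' q' : Fin n) :
    sglMap n k l p q * sglMap n k' l' p' q' =
      if p = k' ∧ q = l' then sglMap n k l p' q' else constMap n zero := by
  refine MapBn.ext ?_ fun i j => ?_ <;> (split_ifs <;> simp_all) <;> split_ifs <;> simp_all

end Multiplication

section APlus

variable {n : ℕ}

lemma constMap_mem_APlus (c : Bn n) : constMap n c ∈ APlus n := Or.inl ⟨c, rfl⟩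

lemma nSuppMap_mem_APlus (p q : Fin n) (σ : Perm (Fin n)) : nSuppMap n p q σ ∈ APlus n :=
  Or.inr (Or.inl ⟨p, q, σ, rfl⟩)

lemma sglMap_mem_APlus (k l p q : Fin n) : sglMap n k l p q ∈ APlus n :=
  Or.inr (Or.inr ⟨k, l, p, q, rfl⟩)

lemma mul_mem_APlus {f g : MapBn n} (hf : f ∈ APlus n) (hg : g ∈ APlus n) :
    f * g ∈ APlus n := by
  rcases hf with ⟨c, rfl⟩ | ⟨p, q, σ, rfl⟩ | ⟨k, l, p, q, rfl⟩ <;>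
  rcases hg with ⟨c', rfl⟩ | ⟨p', q', σ', rfl⟩ | ⟨k', l', p', q', rfl⟩ <;>
  simp only [constMap_mul, mul_constMap, nSuppMap_mul_nSuppMap, nSuppMap_mul_sglMap,
    sglMap_mul_nSuppMap, sglMap_mul_sglMap] <;>
  (try split_ifs) <;>
  first
  | exact constMap_mem_APlus _
  | exact nSuppMap_mem_APlus _ _ _
  | exact sglMap_mem_APlus _ _ _ _

lemma closure_subset_APlus {U : Set (MapBn n)} (hU : U ⊆ APlus n) :
    (Subsemigroup.closure U : Set (MapBn n)) ⊆ APlus n :=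
  Subsemigroup.closure_le (S := ⟨APlus n, mul_mem_APlus⟩) |>.2 hU

end APlus

section Factorization

variable {n : ℕ} [Nontrivial (Fin n)] {f g : MapBn n}

lemma exists_nSuppMap_of_mul_eq_nSuppMap (hf : f ∈ APlus n) (hg : g ∈ APlus n) {p q : Fin n}
    {σ : Perm (Fin n)} (h : f * g = nSuppMap n p q σ) :
    ∃ r α β, f = nSuppMap n p r α ∧ g = nSuppMap n r q β ∧ σ = β * α := by
  rcases hf with ⟨c, rfl⟩ | ⟨p₁, q₁, σ₁, rfl⟩ | ⟨k₁, l₁, p₁, q₁, rfl⟩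
  · simp at h
  · rcases hg with ⟨c, rfl⟩ | ⟨p₂, q₂, σ₂, rfl⟩ | ⟨k₂, l₂, p₂, q₂, rfl⟩
    · simp at h
    · rw [nSuppMap_mul_nSuppMap] at h
      split_ifs at h with hq
      · obtain ⟨rfl, rfl, rfl⟩ := nSuppMap_inj.1 h
        exact ⟨q₁, σ₁, σ₂, rfl, hq ▸ rfl, rfl⟩
      · simp at h
    · rw [nSuppMap_mul_sglMap] at h
      split_ifs at h <;> simp at h
  · rcases hg with ⟨c, rfl⟩ | ⟨p₂, q₂, σ₂, rfl⟩ | ⟨k₂, l₂, p₂, q₂, rfl⟩ <;>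
    simp only [mul_constMap, sglMap_mul_nSuppMap, sglMap_mul_sglMap] at h <;>
    (try split_ifs at h) <;> simp at h

lemma exists_sglMap_of_mul_eq_sglMap (hf : f ∈ APlus n) (hg : g ∈ APlus n) {k l p q : Fin n}
    (h : f * g = sglMap n k l p q) :
    (∃ k l p q, f = sglMap n k l p q) ∨ ∃ k l p q, g = sglMap n k l p q := by
  rcases hf with ⟨c, rfl⟩ | ⟨p₁, q₁, σ₁, rfl⟩ | hf
  · simp at h
  · rcases hg with ⟨c, rfl⟩ | ⟨p₂, q₂, σ₂, rfl⟩ | hg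
    · simp at h
    · rw [nSuppMap_mul_nSuppMap] at h
      split_ifs at h <;> simp at h
    · exact Or.inr hg
  · exact Or.inl hf

end Factorization

section LowerBound

variable {n : ℕ} {U : Set (MapBn n)}

lemma exists_constMap_mem [Nonempty (Fin n)]
    (hcl : (Subsemigroup.closure U : Set (MapBn n)) = APlus n) : ∃ c, constMap n c ∈ U := by
  obtain ⟨i⟩ := ‹Nonempty (Fin n)›
  obtain ⟨u, hu, hu₀⟩ := Subsemigroup.exists_mem_of_mem_closure (X := {f | f zero ≠ zero})
    hcl.subset (fun f _ g _ h => by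
      by_cases hf : f zero = zero
      · exact Or.inr (by simpa [hf] using h)
      · exact Or.inl hf)
    (hcl.ge (constMap_mem_APlus (mk i i))) (by simp)
  rcases hcl.le (Subsemigroup.subset_closure hu) with
    ⟨c, rfl⟩ | ⟨p, q, σ, rfl⟩ | ⟨k, l, p, q, rfl⟩
  · exact ⟨c, hu⟩
  all_goals simp at hu₀

lemma exists_sglMap_mem [Nontrivial (Fin n)]
    (hcl : (Subsemigroup.closure U : Set (MapBn n)) = APlus n) :
    ∃ k l p q, sglMap n k l p q ∈ U := by
  obtain ⟨i, -⟩ := exists_pair_ne (Fin n)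
  obtain ⟨u, hu, k, l, p, q, rfl⟩ := Subsemigroup.exists_mem_of_mem_closure
    (X := {f | ∃ k l p q, f = sglMap n k l p q}) hcl.subset
    (fun f hf g hg ⟨_, _, _, _, h⟩ => exists_sglMap_of_mul_eq_sglMap hf hg h)
    (hcl.ge (sglMap_mem_APlus i i i i)) ⟨i, i, i, i, rfl⟩
  exact ⟨k, l, p, q, hu⟩

lemma exists_nSuppMap_mem [Nontrivial (Fin n)]
    (hcl : (Subsemigroup.closure U : Set (MapBn n)) = APlus n) (p : Fin n) :
    ∃ q σ, nSuppMap n p q σ ∈ U := by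
  obtain ⟨u, hu, q, σ, rfl⟩ := Subsemigroup.exists_mem_of_mem_closure
    (X := {f | ∃ q σ, f = nSuppMap n p q σ}) hcl.subset
    (fun f hf g hg ⟨_, _, h⟩ => by
      obtain ⟨r, α, -, rfl, -⟩ := exists_nSuppMap_of_mul_eq_nSuppMap hf hg h
      exact Or.inl ⟨r, α, rfl⟩)
    (hcl.ge (nSuppMap_mem_APlus p p 1)) ⟨p, 1, rfl⟩
  exact ⟨q, σ, hu⟩

lemma exists_eq_orbitProd_of_nSuppMap_mem_closure [Nontrivial (Fin n)] (hU : U ⊆ APlus n)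
    {τ : Fin n → Fin n} {ρ : Fin n → Perm (Fin n)}
    (hτρ : ∀ p q σ, nSuppMap n p q σ ∈ U → q = τ p ∧ σ = ρ p) {p q : Fin n}
    {σ : Perm (Fin n)} (h : nSuppMap n p q σ ∈ Subsemigroup.closure U) :
    ∃ k, q = τ^[k] p ∧ σ = orbitProd τ ρ p k := by
  suffices ∀ x ∈ Subsemigroup.closure U, ∀ p q σ, x = nSuppMap n p q σ →
      ∃ k, q = τ^[k] p ∧ σ = orbitProd τ ρ p k from this _ h p q σ rfl
  intro x hx
  induction hx using Subsemigroup.closure_induction with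
  | mem x hx =>
    rintro p q σ rfl
    obtain ⟨rfl, rfl⟩ := hτρ p q σ hx
    exact ⟨1, rfl, (mul_one _).symm⟩
  | mul f g hf hg ihf ihg =>
    intro p q σ h
    obtain ⟨r, α, β, rfl, rfl, rfl⟩ := exists_nSuppMap_of_mul_eq_nSuppMap
      (closure_subset_APlus hU hf) (closure_subset_APlus hU hg) h
    obtain ⟨a, rfl, rfl⟩ := ihf p _ α rfl
    obtain ⟨b, rfl, rfl⟩ := ihg _ q β rfl
    exact ⟨a + b, by rw [add_comm, Function.iterate_add_apply], (orbitProd_add τ ρ p a b).symm⟩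

lemma exists_nSuppMap_mem_ne (hn : 3 ≤ n)
    (hcl : (Subsemigroup.closure U : Set (MapBn n)) = APlus n) (τ : Fin n → Fin n)
    (ρ : Fin n → Perm (Fin n)) : ∃ p q σ, nSuppMap n p q σ ∈ U ∧ (q ≠ τ p ∨ σ ≠ ρ p) := by
  have := Fin.nontrivial_iff_two_le.2 (by omega : 2 ≤ n)
  by_contra! hτρ
  obtain ⟨a, b, c, hab, hac, hbc⟩ :=
    (Fintype.two_lt_card_iff (α := Fin n)).1 (by rwa [Fintype.card_fin])
  have loop (σ : Perm (Fin n)) : ∃ k, τ^[k] a = a ∧ σ = orbitProd τ ρ a k := by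
    obtain ⟨k, hk, rfl⟩ := exists_eq_orbitProd_of_nSuppMap_mem_closure
      (Subsemigroup.subset_closure.trans hcl.le) hτρ (hcl.ge (nSuppMap_mem_APlus a a σ))
    exact ⟨k, hk.symm, rfl⟩
  obtain ⟨k, hk, h₁⟩ := loop (swap a b)
  obtain ⟨l, hl, h₂⟩ := loop (swap b c)
  exact not_commute_swap_swap hab hac hbc (h₁ ▸ h₂ ▸ commute_orbitProd ρ hk hl)

lemma ncard_insert_constMap_sglMap_nSuppMap [Nontrivial (Fin n)] (c : Bn n) (k l p' q' : Fin n)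
    (τ : Fin n → Fin n) (ρ : Fin n → Perm (Fin n)) {p q : Fin n} {σ : Perm (Fin n)}
    (hne : q ≠ τ p ∨ σ ≠ ρ p) :
    (insert (constMap n c) (insert (sglMap n k l p' q')
      (insert (nSuppMap n p q σ) (range fun r => nSuppMap n r (τ r) (ρ r))))).ncard = n + 3 := by
  have hinj : Function.Injective fun r => nSuppMap n r (τ r) (ρ r) :=
    fun r r' h => (nSuppMap_inj.1 h).1
  have hσ : nSuppMap n p q σ ∉ range fun r => nSuppMap n r (τ r) (ρ r) := by
    rintro ⟨r, hr⟩
    obtain ⟨rfl, rfl, rfl⟩ := nSuppMap_inj.1 hr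
    simp at hne
  rw [ncard_insert_of_notMem (by simp), ncard_insert_of_notMem (by simp),
    ncard_insert_of_notMem hσ, ncard_range_of_injective hinj, Nat.card_eq_fintype_card,
    Fintype.card_fin]

lemma add_three_le_ncard_of_closure_eq (hn : 3 ≤ n)
    (hcl : (Subsemigroup.closure U : Set (MapBn n)) = APlus n) : n + 3 ≤ U.ncard := by
  have := Fin.nontrivial_iff_two_le.2 (by omega : 2 ≤ n)
  obtain ⟨c, hc⟩ := exists_constMap_mem hcl
  obtain ⟨k, l, p', q', hs⟩ := exists_sglMap_mem hcl
  choose τ ρ hτρ using exists_nSuppMap_mem hcl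
  obtain ⟨p, q, σ, hσ, hne⟩ := exists_nSuppMap_mem_ne hn hcl τ ρ
  rw [← ncard_insert_constMap_sglMap_nSuppMap c k l p' q' τ ρ hne]
  refine ncard_le_ncard ?_
  rintro f (rfl | rfl | rfl | ⟨r, rfl⟩)
  exacts [hc, hs, hσ, hτρ r]

end LowerBound

section Generators

variable {n : ℕ}

def generators (n : ℕ) : Set (MapBn (n + 2)) :=
  insert (constMap _ (mk 0 0)) <| insert (sglMap _ 0 0 0 0) <|
    insert (nSuppMap _ 0 0 (swap 0 1)) <|
      range fun p => nSuppMap _ p (p + 1) (if p = 0 then finRotate _ else 1)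

local notation "T" => Subsemigroup.closure (generators n)

lemma generators_subset_APlus : generators n ⊆ APlus (n + 2) := by
  rintro f (rfl | rfl | rfl | ⟨p, rfl⟩)
  exacts [constMap_mem_APlus _, sglMap_mem_APlus _ _ _ _, nSuppMap_mem_APlus _ _ _,
    nSuppMap_mem_APlus _ _ _]

lemma ncard_generators : (generators n).ncard = n + 2 + 3 :=
  ncard_insert_constMap_sglMap_nSuppMap _ _ _ _ _ (· + 1) _ (Or.inl (by simp))

lemma step_mem_closure_generators (p : Fin (n + 2)) :
    nSuppMap _ p (p + 1) (if p = 0 then finRotate _ else 1) ∈ T :=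
  Subsemigroup.subset_closure (Or.inr (Or.inr (Or.inr ⟨p, rfl⟩)))

lemma nSuppMap_zero_finRotate_mem_closure_generators {j : Fin (n + 2)} (hj : j ≠ 0) :
    nSuppMap _ 0 j (finRotate _) ∈ T := by
  induction j using Fin.induction with
  | zero => exact absurd rfl hj
  | succ i ih =>
    by_cases hi : i.castSucc = 0
    · obtain rfl : i = 0 := by simpa using hi
      simpa using step_mem_closure_generators (n := n) 0
    · have := mul_mem (ih hi) (step_mem_closure_generators i.castSucc)
      rwa [nSuppMap_mul_nSuppMap, if_pos rfl, if_neg hi, one_mul, Fin.coeSucc_eq_succ] at this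

lemma nSuppMap_zero_zero_finRotate_mem_closure_generators :
    nSuppMap _ 0 0 (finRotate _) ∈ T := by
  have hlast : Fin.last (n + 1) ≠ 0 := by simp
  have := mul_mem (nSuppMap_zero_finRotate_mem_closure_generators hlast)
    (step_mem_closure_generators (Fin.last _))
  rwa [nSuppMap_mul_nSuppMap, if_pos rfl, if_neg hlast, one_mul, Fin.last_add_one] at this

lemma nSuppMap_zero_zero_mem_closure_generators (σ : Perm (Fin (n + 2))) :
    nSuppMap _ 0 0 σ ∈ T := by
  let K : Subsemigroup (Perm (Fin (n + 2))) :=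
    { carrier := {σ | nSuppMap _ 0 0 σ ∈ T}
      mul_mem' := fun {a b} (ha : nSuppMap _ 0 0 a ∈ T) (hb : nSuppMap _ 0 0 b ∈ T) => by
        simpa [nSuppMap_mul_nSuppMap] using mul_mem hb ha }
  have hswap : swap 0 1 ∈ K := Subsemigroup.subset_closure (Or.inr (Or.inr (Or.inl rfl)))
  have hK := Subgroup.closure_subset_of_subsemigroup (K := K)
    (s := {finRotate _, swap 0 (finRotate _ 0)})
    (by simpa [insert_subset_iff, finRotate_apply] using
      ⟨nSuppMap_zero_zero_finRotate_mem_closure_generators, hswap⟩)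
    (by simpa [nSuppMap_mul_nSuppMap] using mul_mem hswap hswap)
  rw [Equiv.Perm.closure_cycle_adjacent_swap isCycle_finRotate support_finRotate] at hK
  exact hK (mem_univ σ)

lemma exists_nSuppMap_mem_closure_generators (p q : Fin (n + 2)) :
    ∃ α, nSuppMap _ p q α ∈ T := by
  have hτ (x : Fin (n + 2)) : finRotate _ x ≠ x :=
    Perm.mem_support.1 (support_finRotate ▸ Finset.mem_univ x)
  obtain ⟨i, hi, -, rfl⟩ := (isCycle_finRotate.sameCycle (hτ p) (hτ q)).exists_pow_eq''
  induction i, Nat.succ_le_of_lt hi using Nat.le_induction with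
  | base => exact ⟨_, by simpa [finRotate_apply] using step_mem_closure_generators p⟩
  | succ i hi ih =>
    obtain ⟨α, hα⟩ := ih (by omega)
    have := mul_mem hα (step_mem_closure_generators ((finRotate _ ^ i) p))
    rw [nSuppMap_mul_nSuppMap, if_pos rfl] at this
    exact ⟨_, by rwa [pow_succ', Perm.mul_apply, finRotate_apply]⟩

lemma nSuppMap_mem_closure_generators (p q : Fin (n + 2)) (σ : Perm (Fin (n + 2))) :
    nSuppMap _ p q σ ∈ T := by
  obtain ⟨α, hα⟩ := exists_nSuppMap_mem_closure_generators p 0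
  obtain ⟨γ, hγ⟩ := exists_nSuppMap_mem_closure_generators 0 q
  have := mul_mem (mul_mem hα (nSuppMap_zero_zero_mem_closure_generators (γ⁻¹ * σ * α⁻¹))) hγ
  simpa [nSuppMap_mul_nSuppMap, mul_assoc] using this

lemma sglMap_mem_closure_generators (k l p q : Fin (n + 2)) : sglMap _ k l p q ∈ T := by
  have := mul_mem (mul_mem (nSuppMap_mem_closure_generators l 0 (swap 0 k))
    (Subsemigroup.subset_closure (Or.inr (Or.inl rfl)) : sglMap _ 0 0 0 0 ∈ T))
    (nSuppMap_mem_closure_generators 0 q (swap 0 p))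
  simpa [nSuppMap_mul_sglMap, sglMap_mul_nSuppMap] using this

lemma constMap_mem_closure_generators (c : Bn (n + 2)) : constMap _ c ∈ T := by
  have h₀ : constMap _ (mk 0 0) ∈ T := Subsemigroup.subset_closure (Or.inl rfl)
  rcases c.eq_zero_or_eq_mk with rfl | ⟨p, q, rfl⟩
  · simpa using mul_mem h₀ (sglMap_mem_closure_generators 1 1 0 0)
  · simpa using mul_mem h₀ (sglMap_mem_closure_generators 0 0 p q)

lemma closure_generators : (T : Set (MapBn (n + 2))) = APlus (n + 2) := by
  refine (closure_subset_APlus generators_subset_APlus).antisymm ?_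
  rintro f (⟨c, rfl⟩ | ⟨p, q, σ, rfl⟩ | ⟨k, l, p, q, rfl⟩)
  exacts [constMap_mem_closure_generators c, nSuppMap_mem_closure_generators p q σ,
    sglMap_mem_closure_generators k l p q]

end Generators

theorem lower_rank_APlus (n : ℕ) (hn : 3 ≤ n) :
    sInf {k | ∃ U : Set (MapBn n), U ⊆ APlus n ∧ U.ncard = k ∧
      (Subsemigroup.closure U : Set (MapBn n)) = APlus n} = n + 3 := by
  obtain ⟨m, rfl⟩ : ∃ m, n = m + 1 + 2 := ⟨n - 3, by omega⟩
  refine le_antisymm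
    (Nat.sInf_le ⟨_, generators_subset_APlus, ncard_generators, closure_generators⟩) ?_
  refine le_csInf ⟨_, _, generators_subset_APlus, rfl, closure_generators⟩ ?_
  rintro k ⟨U, -, rfl, hcl⟩
  exact add_three_le_ncard_of_closure_eq hn hcl
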